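/- arXiv:2210.02926 — 4 statements merged into one kernel-verified Lean document; each statement's English description precedes it below -/
import Mathlib

section
/- Let M be a skew-symmetric 6×6 matrix of linear forms over ℂ which has skew format (d), i.e. for some S₀ ∈ GL(6,ℂ) the matrix S₀·M·S₀ᵀ is block-diagonal with two skew-symmetric 3×3 blocks of linear forms, and suppose M is stable in the sense that it has none of the skew formats NS₁, NS₂, NS₃. Then there exist S ∈ GL(6,ℂ) and linear forms l₀,l₁,l₂,m₀,m₁,m₂ with {l₀,l₁,l₂} linearly independent and {m₀,m₁,m₂} linearly independent, such that S·M·Sᵀ is the block-diagonal matrix with blocks [[0,l₀,l₁],[−l₀,0,l₂],[−l₁,−l₂,0]] and [[0,m₀,m₁],[−m₀,0,m₂],[−m₁,−m₂,0]]. -/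
open Matrix MvPolynomial

noncomputable section

/-- The polynomial ring `ℂ[x₀,…,x_{n-1}]`. -/
abbrev CPoly (n : ℕ) := MvPolynomial (Fin n) ℂ

/-- All entries of the matrix are linear forms (homogeneous of degree 1, possibly 0). -/
def LinForms {k n : ℕ} (M : Matrix (Fin k) (Fin k) (CPoly n)) : Prop :=
  ∀ i j, (M i j).IsHomogeneous 1

/-- Skew-symmetric matrix with zero diagonal. -/
def IsSkewMat {k n : ℕ} (M : Matrix (Fin k) (Fin k) (CPoly n)) : Prop :=
  Mᵀ = -M ∧ ∀ i, M i i = 0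

/-- Congruence action `M ↦ S·M·Sᵀ` of a constant matrix `S` on a matrix of polynomials. -/
def Congr {k n : ℕ} (S : Matrix (Fin k) (Fin k) ℂ) (M : Matrix (Fin k) (Fin k) (CPoly n)) :
    Matrix (Fin k) (Fin k) (CPoly n) :=
  S.map MvPolynomial.C * M * (S.map MvPolynomial.C)ᵀ

/-- `M` has skew format `P` : some congruent matrix `S·M·Sᵀ` (with `S` invertible) has form `P`. -/
def HasFmt {k n : ℕ} (P : Matrix (Fin k) (Fin k) (CPoly n) → Prop)
    (M : Matrix (Fin k) (Fin k) (CPoly n)) : Prop :=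
  ∃ S : Matrix (Fin k) (Fin k) ℂ, IsUnit S.det ∧ P (Congr S M)

/-- A `6×6` matrix built from four `3×3` blocks. -/
def blk {n : ℕ} (A B C D : Matrix (Fin 3) (Fin 3) (CPoly n)) :
    Matrix (Fin 6) (Fin 6) (CPoly n) :=
  Matrix.reindex finSumFinEquiv finSumFinEquiv (Matrix.fromBlocks A B C D)

/-- Format (a): the row and column of index 5 are zero. -/
def FormA {n : ℕ} (N : Matrix (Fin 6) (Fin 6) (CPoly n)) : Prop :=
  ∀ i, N i 5 = 0 ∧ N 5 i = 0

/-- Format (b): `m_{ij} = 0` for all `i, j ∈ {2,3,4,5}`. -/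
def FormB {n : ℕ} (N : Matrix (Fin 6) (Fin 6) (CPoly n)) : Prop :=
  ∀ i j : Fin 6, 2 ≤ (i : ℕ) → 2 ≤ (j : ℕ) → N i j = 0

/-- Format (c): `m_{ij} = 0` whenever `i ≥ 1, j ≥ 4` or `i ≥ 4, j ≥ 1`. -/
def FormC {n : ℕ} (N : Matrix (Fin 6) (Fin 6) (CPoly n)) : Prop :=
  ∀ i j : Fin 6, ((1 ≤ (i : ℕ) ∧ 4 ≤ (j : ℕ)) ∨ (4 ≤ (i : ℕ) ∧ 1 ≤ (j : ℕ))) → N i j = 0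

/-- Format (d): `m_{ij} = 0` whenever exactly one of `i, j` is `≤ 2`. -/
def FormD {n : ℕ} (N : Matrix (Fin 6) (Fin 6) (CPoly n)) : Prop :=
  ∀ i j : Fin 6, (((i : ℕ) ≤ 2 ∧ 3 ≤ (j : ℕ)) ∨ (3 ≤ (i : ℕ) ∧ (j : ℕ) ≤ 2)) → N i j = 0

/-- Double skew format (e): `N = [[N₀,N₁],[N₁,0]]` with `N₀, N₁` skew `3×3` of linear forms. -/
def FormE {n : ℕ} (N : Matrix (Fin 6) (Fin 6) (CPoly n)) : Prop :=
  ∃ N0 N1 : Matrix (Fin 3) (Fin 3) (CPoly n),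
    IsSkewMat N0 ∧ IsSkewMat N1 ∧ LinForms N0 ∧ LinForms N1 ∧ N = blk N0 N1 N1 0

/-- Double skew format (f): `N = [[N₀,N₁],[N₁,N₂]]` with `N₁` skew `3×3` of linear forms,
`N₀ = [[0,p,0],[−p,0,0],[0,0,0]]`, `N₂ = [[0,q,0],[−q,0,0],[0,0,0]]`. -/
def FormF {n : ℕ} (N : Matrix (Fin 6) (Fin 6) (CPoly n)) : Prop :=
  ∃ (N1 : Matrix (Fin 3) (Fin 3) (CPoly n)) (p q : CPoly n),
    IsSkewMat N1 ∧ LinForms N1 ∧ p.IsHomogeneous 1 ∧ q.IsHomogeneous 1 ∧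
    N = blk !![0, p, 0; -p, 0, 0; 0, 0, 0] N1 N1 !![0, q, 0; -q, 0, 0; 0, 0, 0]

/-- Comaschi format NS₁: `m_{0j} = 0` for all `j ≤ 4`. -/
def FormNS1 {n : ℕ} (N : Matrix (Fin 6) (Fin 6) (CPoly n)) : Prop :=
  ∀ j : Fin 6, (j : ℕ) ≤ 4 → N 0 j = 0

/-- Comaschi format NS₂: `m_{ij} = 0` for all `i ∈ {0,1}`, `j ∈ {0,1,2,3}`. -/
def FormNS2 {n : ℕ} (N : Matrix (Fin 6) (Fin 6) (CPoly n)) : Prop :=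
  ∀ i j : Fin 6, (i : ℕ) ≤ 1 → (j : ℕ) ≤ 3 → N i j = 0

/-- Comaschi format NS₃: `m_{ij} = 0` for all `i, j ∈ {0,1,2}`. -/
def FormNS3 {n : ℕ} (N : Matrix (Fin 6) (Fin 6) (CPoly n)) : Prop :=
  ∀ i j : Fin 6, (i : ℕ) ≤ 2 → (j : ℕ) ≤ 2 → N i j = 0

/-- Comaschi format NSS₁: `m_{0j} = 0` for all `j`. -/
def FormNSS1 {n : ℕ} (N : Matrix (Fin 6) (Fin 6) (CPoly n)) : Prop :=
  ∀ j : Fin 6, N 0 j = 0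

/-- Comaschi format NSS₂: `m_{ij} = 0` for all `i ∈ {0,1}`, `j ∈ {0,1,2,3,4}`. -/
def FormNSS2 {n : ℕ} (N : Matrix (Fin 6) (Fin 6) (CPoly n)) : Prop :=
  ∀ i j : Fin 6, (i : ℕ) ≤ 1 → (j : ℕ) ≤ 4 → N i j = 0

/-- Comaschi format NSS₃: `m_{ij} = 0` for all `i, j ∈ {0,1,2,3}`. -/
def FormNSS3 {n : ℕ} (N : Matrix (Fin 6) (Fin 6) (CPoly n)) : Prop :=
  ∀ i j : Fin 6, (i : ℕ) ≤ 3 → (j : ℕ) ≤ 3 → N i j = 0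

/-! After the congruence given by format (d), `M` is block diagonal with skew `3 × 3` blocks, and
their upper entries serve as `l` and `m` once each triple is shown linearly independent. For a skew
block `A` with upper entries `a, b, c` one has `pᵀ A q = (p × q) ⬝ (c, -b, a)`, and every vector is a
cross product, so a linear relation among `a, b, c` yields independent `p, q` with `pᵀ A q = 0`.
A congruence whose rows start with `p, q` followed by the unit vectors of the other block then
makes row 0 vanish in columns 0–4, i.e. produces skew format NS₁. The lower block is reduced to
the upper one by swapping the blocks. -/

section Congruence

variable {k n : ℕ}

theorem congr_congr (S T : Matrix (Fin k) (Fin k) ℂ) (M : Matrix (Fin k) (Fin k) (CPoly n)) :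
    Congr S (Congr T M) = Congr (S * T) M := by
  simp only [Congr, Matrix.map_mul, Matrix.transpose_mul, mul_assoc]

theorem congr_apply (S : Matrix (Fin k) (Fin k) ℂ) (M : Matrix (Fin k) (Fin k) (CPoly n))
    (i j : Fin k) : Congr S M i j = ∑ a, ∑ b, C (S i a) * M a b * C (S j b) := by
  simp only [Congr, mul_apply, map_apply, transpose_apply, Finset.sum_mul]
  exact Finset.sum_comm

theorem IsSkewMat.apply_swap {M : Matrix (Fin k) (Fin k) (CPoly n)} (h : IsSkewMat M)
    (i j : Fin k) : M j i = -M i j :=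
  congrFun (congrFun h.1 i) j

theorem IsSkewMat.congr {M : Matrix (Fin k) (Fin k) (CPoly n)} (h : IsSkewMat M)
    (S : Matrix (Fin k) (Fin k) ℂ) : IsSkewMat (Congr S M) := by
  have ht : (Congr S M)ᵀ = -Congr S M := by
    simp only [Congr, transpose_mul, transpose_transpose, h.1, Matrix.mul_neg, Matrix.neg_mul,
      mul_assoc]
  refine ⟨ht, fun i => ?_⟩
  have := congrFun (congrFun ht i) i
  simp only [transpose_apply] at this
  exact CharZero.eq_neg_self_iff.mp this

theorem LinForms.congr {M : Matrix (Fin k) (Fin k) (CPoly n)} (h : LinForms M)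
    (S : Matrix (Fin k) (Fin k) ℂ) : LinForms (Congr S M) := fun i j => by
  rw [congr_apply]
  exact IsHomogeneous.sum _ _ _ fun a _ => IsHomogeneous.sum _ _ _ fun b _ =>
    ((isHomogeneous_C _ _).mul (h a b)).mul (isHomogeneous_C _ _)

theorem HasFmt.of_congr {P : Matrix (Fin k) (Fin k) (CPoly n) → Prop}
    {M : Matrix (Fin k) (Fin k) (CPoly n)} {T : Matrix (Fin k) (Fin k) ℂ} (hT : IsUnit T.det)
    (h : HasFmt P (Congr T M)) : HasFmt P M := by
  obtain ⟨S, hS, hP⟩ := h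
  exact ⟨S * T, by rw [det_mul]; exact hS.mul hT, by rwa [← congr_congr]⟩

theorem congr_permMatrix (σ : Equiv.Perm (Fin k)) (M : Matrix (Fin k) (Fin k) (CPoly n)) :
    Congr (σ.permMatrix ℂ) M = M.submatrix σ σ := by
  ext i j : 1
  simp [congr_apply, PEquiv.toMatrix_apply, apply_ite C]

end Congruence

theorem exists_cross_eq {K : Type*} [Field K] (ω : Fin 3 → K) : ∃ p q : Fin 3 → K, p ⨯₃ q = ω := by
  by_cases h : ω 2 = 0
  · refine ⟨![0, 0, 1], ![ω 1, -ω 0, 0], ?_⟩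
    ext i; fin_cases i <;> simp [cross_apply, h]
  · refine ⟨![1, 0, -ω 0 / ω 2], ![0, ω 2, -ω 1], ?_⟩
    ext i; fin_cases i <;> simp [cross_apply]; field_simp

def blockFrame (p q r : Fin 3 → ℂ) : Matrix (Fin 6) (Fin 6) ℂ :=
  !![p 0, p 1, p 2, 0, 0, 0; q 0, q 1, q 2, 0, 0, 0; 0, 0, 0, 1, 0, 0; 0, 0, 0, 0, 1, 0;
    0, 0, 0, 0, 0, 1; r 0, r 1, r 2, 0, 0, 0]

theorem det_blockFrame (p q r : Fin 3 → ℂ) : (blockFrame p q r).det = -(r ⬝ᵥ p ⨯₃ q) := by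
  simp [blockFrame, det_succ_row_zero, Fin.sum_univ_succ, Fin.succAbove, cross_apply,
    dotProduct]
  ring

section FormatD

variable {n : ℕ} {N : Matrix (Fin 6) (Fin 6) (CPoly n)}

theorem congr_blockFrame_zero_one (hN : IsSkewMat N) (p q r : Fin 3 → ℂ) :
    Congr (blockFrame p q r) N 0 1 =
      C ((p ⨯₃ q) 0) * N 1 2 - C ((p ⨯₃ q) 1) * N 0 2 + C ((p ⨯₃ q) 2) * N 0 1 := by
  simp [congr_apply, blockFrame, Fin.sum_univ_six, cross_apply, hN.2, hN.apply_swap 0 1,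
    hN.apply_swap 0 2, hN.apply_swap 1 2]
  ring

theorem congr_blockFrame_zero_eq_zero (hD : FormD N) (p q r : Fin 3 → ℂ) {j : Fin 6}
    (hj₂ : 2 ≤ (j : ℕ)) (hj₄ : (j : ℕ) ≤ 4) : Congr (blockFrame p q r) N 0 j = 0 := by
  have h (a : Fin 6) (ha : (a : ℕ) ≤ 2) (b : Fin 6) (hb : 3 ≤ (b : ℕ)) : N a b = 0 :=
    hD a b (Or.inl ⟨ha, hb⟩)
  fin_cases j <;> simp at hj₂ hj₄ <;> simp [congr_apply, blockFrame, Fin.sum_univ_six, h]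

theorem FormD.hasFmt_formNS1_of_not_linearIndependent_upper (hD : FormD N) (hN : IsSkewMat N)
    (hdep : ¬ LinearIndependent ℂ ![N 0 1, N 0 2, N 1 2]) : HasFmt FormNS1 N := by
  obtain ⟨g, hsum, i, hgi⟩ := Fintype.not_linearIndependent_iff.mp hdep
  set ω : Fin 3 → ℂ := ![g 2, -g 1, g 0]
  have hω : ω ≠ 0 := by
    intro h
    have h0 := congrFun h 0; have h1 := congrFun h 1; have h2 := congrFun h 2
    fin_cases i <;> simp_all [ω]
  obtain ⟨p, q, hpq⟩ := exists_cross_eq ω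
  obtain ⟨r, hr⟩ : ∃ r, ω ⬝ᵥ r ≠ 0 := by
    by_contra! h; exact hω (dotProduct_eq_zero_iff.mp h)
  refine ⟨blockFrame p q r, ?_, fun j hj => ?_⟩
  · rw [det_blockFrame, hpq, dotProduct_comm, isUnit_iff_ne_zero, neg_ne_zero]
    exact hr
  · rcases j.val.lt_or_ge 2 with hj₂ | hj₂
    · obtain rfl | rfl : j = 0 ∨ j = 1 := by omega
      · exact (hN.congr _).2 0
      · rw [congr_blockFrame_zero_one hN, hpq]
        simp only [Fin.sum_univ_three, smul_eq_C_mul, cons_val_zero, cons_val_one, cons_val] at hsum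
        simp only [ω, cons_val_zero, cons_val_one, cons_val, C_neg]
        linear_combination hsum
    · exact congr_blockFrame_zero_eq_zero hD p q r hj₂ hj

theorem FormD.submatrix_addRight (hD : FormD N) :
    FormD (N.submatrix (Equiv.addRight 3) (Equiv.addRight 3)) := by
  have hshift : ∀ i j : Fin 6, (((i : ℕ) ≤ 2 ∧ 3 ≤ (j : ℕ)) ∨ (3 ≤ (i : ℕ) ∧ (j : ℕ) ≤ 2)) →
      (((i + 3 : Fin 6) : ℕ) ≤ 2 ∧ 3 ≤ ((j + 3 : Fin 6) : ℕ)) ∨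
        (3 ≤ ((i + 3 : Fin 6) : ℕ) ∧ ((j + 3 : Fin 6) : ℕ) ≤ 2) := by decide
  exact fun i j h => hD _ _ (hshift i j h)

theorem FormD.hasFmt_formNS1_of_not_linearIndependent_lower (hD : FormD N) (hN : IsSkewMat N)
    (hdep : ¬ LinearIndependent ℂ ![N 3 4, N 3 5, N 4 5]) : HasFmt FormNS1 N := by
  let σ : Equiv.Perm (Fin 6) := Equiv.addRight 3
  have hσ : HasFmt FormNS1 (Congr (σ.permMatrix ℂ) N) := by
    rw [congr_permMatrix]
    exact hD.submatrix_addRight.hasFmt_formNS1_of_not_linearIndependent_upper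
      (by rw [← congr_permMatrix]; exact hN.congr _) hdep
  exact hσ.of_congr (by simp [isUnit_iff_ne_zero])

theorem FormD.eq_blk (hD : FormD N) (hN : IsSkewMat N) :
    N = blk !![0, N 0 1, N 0 2; -N 0 1, 0, N 1 2; -N 0 2, -N 1 2, 0] 0 0
      !![0, N 3 4, N 3 5; -N 3 4, 0, N 4 5; -N 3 5, -N 4 5, 0] := by
  refine Matrix.ext fun i j => ?_
  fin_cases i <;> fin_cases j <;>
    first | rfl | exact hN.2 _ | exact hD _ _ (by decide) | exact hN.apply_swap _ _

end FormatD

theorem statement7_general {n : ℕ} (M : Matrix (Fin 6) (Fin 6) (CPoly n))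
    (hlin : LinForms M) (hskew : IsSkewMat M)
    (hfmtD : HasFmt FormD M)
    (hns1 : ¬ HasFmt FormNS1 M) :
    ∃ (S : Matrix (Fin 6) (Fin 6) ℂ) (l m : Fin 3 → CPoly n),
      IsUnit S.det ∧
      (∀ i, (l i).IsHomogeneous 1) ∧ (∀ i, (m i).IsHomogeneous 1) ∧
      LinearIndependent ℂ l ∧ LinearIndependent ℂ m ∧
      Congr S M =
        blk !![0, l 0, l 1; -(l 0), 0, l 2; -(l 1), -(l 2), 0] 0 0
            !![0, m 0, m 1; -(m 0), 0, m 2; -(m 1), -(m 2), 0] := by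
  obtain ⟨S, hS, hD⟩ := hfmtD
  set N := Congr S M
  have hN : IsSkewMat N := hskew.congr S
  have hlinN : LinForms N := hlin.congr S
  have hns1N : ¬ HasFmt FormNS1 N := fun h => hns1 (h.of_congr hS)
  refine ⟨S, ![N 0 1, N 0 2, N 1 2], ![N 3 4, N 3 5, N 4 5], hS, ?_, ?_, ?_, ?_, hD.eq_blk hN⟩
  · simp [Fin.forall_fin_succ, hlinN _ _]
  · simp [Fin.forall_fin_succ, hlinN _ _]
  · by_contra h
    exact hns1N (hD.hasFmt_formNS1_of_not_linearIndependent_upper hN h)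
  · by_contra h
    exact hns1N (hD.hasFmt_formNS1_of_not_linearIndependent_lower hN h)

/-- Normal form for stable skew-symmetric `6×6` matrices of linear forms of format (d). -/
theorem statement7 {n : ℕ} (hn : 1 ≤ n) (M : Matrix (Fin 6) (Fin 6) (CPoly n))
    (hlin : LinForms M) (hskew : IsSkewMat M)
    (hfmtD : HasFmt FormD M)
    (hns1 : ¬ HasFmt FormNS1 M) (hns2 : ¬ HasFmt FormNS2 M) (hns3 : ¬ HasFmt FormNS3 M) :
    ∃ (S : Matrix (Fin 6) (Fin 6) ℂ) (l m : Fin 3 → CPoly n),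
      IsUnit S.det ∧
      (∀ i, (l i).IsHomogeneous 1) ∧ (∀ i, (m i).IsHomogeneous 1) ∧
      LinearIndependent ℂ l ∧ LinearIndependent ℂ m ∧
      Congr S M =
        blk !![0, l 0, l 1; -(l 0), 0, l 2; -(l 1), -(l 2), 0] 0 0
            !![0, m 0, m 1; -(m 0), 0, m 2; -(m 1), -(m 2), 0] :=
  statement7_general M hlin hskew hfmtD hns1
end
end

section
/- Let M be a symmetric 2×2 matrix of linear forms over ℂ with det M = 0. Then there exists S ∈ GL(2,ℂ) such that S·M·Sᵀ has form [[*,0],[0,0]], i.e. all entries of S·M·Sᵀ except possibly the (0,0) entry are zero. -/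
open Matrix MvPolynomial

noncomputable section

namespace MvPolynomial

variable {σ K : Type*}

theorem IsHomogeneous.irreducible_of_one [Field K] {p : MvPolynomial σ K}
    (hp : p.IsHomogeneous 1) (hp0 : p ≠ 0) : Irreducible p := by
  refine irreducible_of_totalDegree_eq_one (hp.totalDegree hp0) fun x hx => ?_
  obtain ⟨m, hm⟩ := ne_zero_iff.mp hp0
  exact (ne_zero_of_dvd_ne_zero hm (hx m)).isUnit

theorem IsHomogeneous.exists_eq_C_mul_of_dvd [CommRing K] [IsDomain K] {b c : MvPolynomial σ K}
    {d : ℕ} (hb : b.IsHomogeneous d) (hc : c.IsHomogeneous d) (hc0 : c ≠ 0) (hcb : c ∣ b) :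
    ∃ l : K, b = C l * c := by
  obtain ⟨q, rfl⟩ := hcb
  rcases eq_or_ne q 0 with rfl | hq0
  · exact ⟨0, by simp⟩
  have hdeg := hb.totalDegree (mul_ne_zero hc0 hq0)
  rw [totalDegree_mul_of_isDomain hc0 hq0, hc.totalDegree hc0, add_eq_left,
    totalDegree_eq_zero_iff_eq_C] at hdeg
  exact ⟨q.coeff 0, by rw [mul_comm, ← hdeg]⟩

/-- A nonzero linear form is prime, so `c ∣ b²` gives `c ∣ b`, with a constant quotient by degree. -/
theorem exists_C_mul_of_mul_self_eq_mul [Field K] {a b c : MvPolynomial σ K}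
    (hb : b.IsHomogeneous 1) (hc : c.IsHomogeneous 1) (hc0 : c ≠ 0) (h : b * b = a * c) :
    ∃ l : K, b = C l * c ∧ a = C (l ^ 2) * c := by
  have hcb : c ∣ b := (hc.irreducible_of_one hc0).prime.dvd_of_dvd_pow
    (n := 2) ⟨a, by rw [sq, h, mul_comm]⟩
  obtain ⟨l, rfl⟩ := hb.exists_eq_C_mul_of_dvd hc hc0 hcb
  refine ⟨l, rfl, mul_right_cancel₀ hc0 ?_⟩
  rw [← h, C_pow]
  ring

end MvPolynomial

theorem congr_one {k n : ℕ} (M : Matrix (Fin k) (Fin k) (CPoly n)) : Congr 1 M = M := by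
  rw [Congr, Matrix.map_one C (map_zero C) (map_one C)]
  simp

/-- `!![l² c, l c; l c, c] = c • v vᵀ` with `v = (l, 1)`, and `!![0, 1; 1, -l]` sends `v` to `(1, 0)`. -/
theorem congr_rankOne {n : ℕ} (l : ℂ) (c : CPoly n) :
    Congr !![0, 1; 1, -l] !![C (l ^ 2) * c, C l * c; C l * c, c] = !![c, 0; 0, 0] := by
  refine Matrix.ext fun i j => ?_
  fin_cases i <;> fin_cases j <;> simp [Congr, Matrix.mul_apply, Fin.sum_univ_two] <;> ring

theorem statement11_general {n : ℕ} (M : Matrix (Fin 2) (Fin 2) (CPoly n))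
    (hlin : LinForms M) (hsymm : Mᵀ = M) (hdet : M.det = 0) :
    ∃ S : Matrix (Fin 2) (Fin 2) ℂ, IsUnit S.det ∧
      Congr S M 0 1 = 0 ∧ Congr S M 1 0 = 0 ∧ Congr S M 1 1 = 0 := by
  have h10 : M 1 0 = M 0 1 := congrFun (congrFun hsymm 0) 1
  have hsq : M 0 1 * M 0 1 = M 0 0 * M 1 1 := by
    rw [det_fin_two, h10, sub_eq_zero] at hdet
    exact hdet.symm
  rcases eq_or_ne (M 1 1) 0 with hc | hc
  · have h01 : M 0 1 = 0 := mul_self_eq_zero.mp (by rw [hsq, hc, mul_zero])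
    exact ⟨1, by simp, by simp [congr_one, h01, h10, hc]⟩
  obtain ⟨l, hb, ha⟩ := exists_C_mul_of_mul_self_eq_mul (hlin 0 1) (hlin 1 1) hc hsq
  have hM : M = !![C (l ^ 2) * M 1 1, C l * M 1 1; C l * M 1 1, M 1 1] := by
    rw [← ha, ← hb]
    exact (eta_fin_two M).trans (by rw [h10])
  refine ⟨!![0, 1; 1, -l], by simp [det_fin_two_of], ?_⟩
  rw [hM, congr_rankOne]
  simp

/-- A symmetric `2×2` matrix of linear forms with vanishing determinant is congruent to a
matrix whose only possibly nonzero entry is in position `(0,0)`. -/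
theorem statement11 {n : ℕ} (hn : 1 ≤ n) (M : Matrix (Fin 2) (Fin 2) (CPoly n))
    (hlin : LinForms M) (hsymm : Mᵀ = M) (hdet : M.det = 0) :
    ∃ S : Matrix (Fin 2) (Fin 2) ℂ, IsUnit S.det ∧
      Congr S M 0 1 = 0 ∧ Congr S M 1 0 = 0 ∧ Congr S M 1 1 = 0 :=
  statement11_general M hlin hsymm hdet
end
end

section
/- Let M be a 2×2 matrix of linear forms over ℂ with det M = 0. Then there exist S, T ∈ GL(2,ℂ) such that S·M·T has a zero column (form [[*,0],[*,0]]) or a zero row (form [[*,*],[0,0]]). -/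
open Matrix MvPolynomial

noncomputable section

/-- The two-sided action `M ↦ S·M·T` of constant matrices on a matrix of polynomials. -/
def Biact {k n : ℕ} (S : Matrix (Fin k) (Fin k) ℂ) (M : Matrix (Fin k) (Fin k) (CPoly n))
    (T : Matrix (Fin k) (Fin k) ℂ) : Matrix (Fin k) (Fin k) (CPoly n) :=
  S.map MvPolynomial.C * M * T.map MvPolynomial.C

open Finset in
section


lemma hc_mul {n m k : ℕ} {p : CPoly n} (hp : p.IsHomogeneous m) (u : CPoly n) :
    homogeneousComponent (m + k) (p * u) = p * homogeneousComponent k u := by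
  conv_lhs => rw [← sum_homogeneousComponent u, Finset.mul_sum, map_sum]
  have step : ∀ j, homogeneousComponent (m + k) (p * homogeneousComponent j u)
      = if m + k = m + j then p * homogeneousComponent j u else 0 := fun j =>
    homogeneousComponent_of_mem ((mem_homogeneousSubmodule _ _).2
      (hp.mul (homogeneousComponent_isHomogeneous j u)))
  simp_rw [step, add_right_inj]
  rw [Finset.sum_ite_eq]
  by_cases hk : k ∈ Finset.range (u.totalDegree + 1)
  · rw [if_pos hk]
  · rw [if_neg hk, homogeneousComponent_eq_zero _ u (by simpa using hk), mul_zero]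

lemma eq_C_of_comps {n : ℕ} {u : CPoly n}
    (h : ∀ k, k ≠ 0 → homogeneousComponent k u = 0) : u = C (coeff 0 u) := by
  conv_lhs => rw [← sum_homogeneousComponent u]
  rw [Finset.sum_eq_single_of_mem 0 (Finset.mem_range.2 (Nat.succ_pos _))
    (fun b _ hb => h b hb), homogeneousComponent_zero]

lemma div_linear {n : ℕ} {p q : CPoly n} (hp : p.IsHomogeneous 1) (hp0 : p ≠ 0)
    (hq : q.IsHomogeneous 1) (hdvd : p ∣ q) : ∃ β : ℂ, q = C β * p := by
  obtain ⟨u, rfl⟩ := hdvd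
  have hu : ∀ k, k ≠ 0 → homogeneousComponent k u = 0 := by
    intro k hk
    have h1 : homogeneousComponent (1 + k) (p * u) = 0 := by
      rw [homogeneousComponent_of_mem ((mem_homogeneousSubmodule _ _).2 hq),
        if_neg (by omega)]
    rw [hc_mul hp] at h1
    exact (mul_eq_zero.1 h1).resolve_left hp0
  refine ⟨coeff 0 u, ?_⟩
  conv_lhs => rw [eq_C_of_comps hu]
  rw [mul_comm]

lemma top_ne {n : ℕ} {q : CPoly n} (h : q ≠ 0) :
    homogeneousComponent q.totalDegree q ≠ 0 := by
  have htd : q.totalDegree = q.support.sup Finsupp.degree := by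
    rw [MvPolynomial.totalDegree]
    exact Finset.sup_congr rfl fun d _ => by rw [Finsupp.degree]; rfl
  obtain ⟨d, hd, hdeg⟩ := Finset.exists_mem_eq_sup q.support
    (MvPolynomial.support_nonempty.2 h) Finsupp.degree
  intro h0
  have hc := coeff_homogeneousComponent q.totalDegree q d
  rw [h0, if_pos (by rw [htd, hdeg])] at hc
  exact (MvPolynomial.mem_support_iff.1 hd) hc.symm

lemma unit_of_deg0 {n : ℕ} {q : CPoly n} (h : q ≠ 0) (hd : q.totalDegree = 0) :
    IsUnit q := by
  have : q = C (coeff 0 q) := eq_C_of_comps (fun k hk =>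
    homogeneousComponent_eq_zero _ q (by omega))
  rw [this]
  have hne : coeff 0 q ≠ 0 := fun h0 => h (by rw [this, h0, map_zero])
  exact (isUnit_iff_ne_zero.2 hne).map (C : ℂ →+* CPoly n)

lemma linear_prime {n : ℕ} {p : CPoly n} (hp : p.IsHomogeneous 1) (hp0 : p ≠ 0) :
    Prime p := by
  rw [← UniqueFactorizationMonoid.irreducible_iff_prime]
  constructor
  · intro hu
    obtain ⟨v, hv⟩ := hu.exists_right_inv
    have hvk : ∀ k, homogeneousComponent k v = 0 := by
      intro k
      have h1 : homogeneousComponent (1 + k) (p * v) = 0 := by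
        rw [hv, homogeneousComponent_of_mem
          ((mem_homogeneousSubmodule _ _).2 (isHomogeneous_one _ _)), if_neg (by omega)]
      rw [hc_mul hp] at h1
      exact (mul_eq_zero.1 h1).resolve_left hp0
    have hv0 : v = 0 := by
      conv_lhs => rw [← sum_homogeneousComponent v]
      exact Finset.sum_eq_zero fun i _ => hvk i
    rw [hv0, mul_zero] at hv
    exact one_ne_zero hv.symm
  · intro q r hqr
    have hq0 : q ≠ 0 := fun h => hp0 (by rw [hqr, h, zero_mul])
    have hr0 : r ≠ 0 := fun h => hp0 (by rw [hqr, h, mul_zero])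
    by_cases hdq : q.totalDegree = 0
    · exact Or.inl (unit_of_deg0 hq0 hdq)
    by_cases hdr : r.totalDegree = 0
    · exact Or.inr (unit_of_deg0 hr0 hdr)
    exfalso
    set dq := q.totalDegree
    set dr := r.totalDegree
    have key : homogeneousComponent (dq + dr) p
        = homogeneousComponent dq q * homogeneousComponent dr r := by
      rw [hqr]
      conv_lhs => rw [← sum_homogeneousComponent q, Finset.sum_mul, map_sum]
      have step : ∀ i ∈ Finset.range (dq + 1),
          homogeneousComponent (dq + dr) (homogeneousComponent i q * r)
          = homogeneousComponent i q * homogeneousComponent (dq + dr - i) r := by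
        intro i hi
        have hle : i ≤ dq := Nat.lt_succ_iff.1 (Finset.mem_range.1 hi)
        have h2 : dq + dr = i + (dq + dr - i) := by omega
        conv_lhs => rw [h2]
        rw [hc_mul (homogeneousComponent_isHomogeneous i q)]
      rw [Finset.sum_congr rfl step]
      rw [Finset.sum_eq_single_of_mem dq (Finset.mem_range.2 (Nat.lt_succ_self _))]
      · simp
      · intro i hi hne
        have hle : i ≤ dq := Nat.lt_succ_iff.1 (Finset.mem_range.1 hi)
        rw [homogeneousComponent_eq_zero _ r (by omega), mul_zero]
    have hz : homogeneousComponent (dq + dr) p = 0 := by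
      rw [homogeneousComponent_of_mem ((mem_homogeneousSubmodule _ _).2 hp),
        if_neg (by omega)]
    rw [hz] at key
    exact mul_ne_zero (top_ne hq0) (top_ne hr0) key.symm

end

/-- A `2×2` matrix of linear forms with vanishing determinant can be transformed by
row and column operations to a matrix with a zero column or a zero row. -/
theorem statement12 {n : ℕ} (hn : 1 ≤ n) (M : Matrix (Fin 2) (Fin 2) (CPoly n))
    (hlin : LinForms M) (hdet : M.det = 0) :
    ∃ S T : Matrix (Fin 2) (Fin 2) ℂ, IsUnit S.det ∧ IsUnit T.det ∧
      ((Biact S M T 0 1 = 0 ∧ Biact S M T 1 1 = 0) ∨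
       (Biact S M T 1 0 = 0 ∧ Biact S M T 1 1 = 0)) := by
  rw [Matrix.det_fin_two] at hdet
  have had : M 0 0 * M 1 1 = M 0 1 * M 1 0 := sub_eq_zero.1 hdet
  by_cases ha : M 0 0 = 0
  · have hbc : M 0 1 * M 1 0 = 0 := by rw [← had, ha, zero_mul]
    rcases mul_eq_zero.1 hbc with hb | hc
    · refine ⟨!![0,1;1,0], 1, ?_, by simp, Or.inr ⟨?_, ?_⟩⟩
      · rw [Matrix.det_fin_two_of]; norm_num
      · simp [Biact, Matrix.mul_apply, Fin.sum_univ_two, Matrix.map_apply, ha]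
      · simp [Biact, Matrix.mul_apply, Fin.sum_univ_two, Matrix.map_apply, hb]
    · refine ⟨1, !![0,1;1,0], by simp, ?_, Or.inl ⟨?_, ?_⟩⟩
      · rw [Matrix.det_fin_two_of]; norm_num
      · simp [Biact, Matrix.mul_apply, Fin.sum_univ_two, Matrix.map_apply, ha]
      · simp [Biact, Matrix.mul_apply, Fin.sum_univ_two, Matrix.map_apply, hc]
  · have hprime := linear_prime (hlin 0 0) ha
    have hdvd : M 0 0 ∣ M 0 1 * M 1 0 := ⟨M 1 1, had.symm⟩
    rcases hprime.2.2 _ _ hdvd with hab | hac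
    · obtain ⟨β, hb⟩ := div_linear (hlin 0 0) ha (hlin 0 1) hab
      have hd : M 1 1 = C β * M 1 0 := by
        apply mul_left_cancel₀ ha
        rw [had, hb]; ring
      refine ⟨1, !![1, -β; 0, 1], by simp, ?_, Or.inl ⟨?_, ?_⟩⟩
      · rw [Matrix.det_fin_two_of]; norm_num
      · simp only [Biact, Matrix.mul_apply, Fin.sum_univ_two, Matrix.map_apply,
          Matrix.one_apply, Matrix.cons_val', Matrix.cons_val_zero, Matrix.cons_val_one,
          Matrix.head_cons, Matrix.head_fin_const, Matrix.empty_val',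
          Matrix.cons_val_fin_one]
        simp [hb, map_neg]
        try ring
      · simp only [Biact, Matrix.mul_apply, Fin.sum_univ_two, Matrix.map_apply,
          Matrix.one_apply, Matrix.cons_val', Matrix.cons_val_zero, Matrix.cons_val_one,
          Matrix.head_cons, Matrix.head_fin_const, Matrix.empty_val',
          Matrix.cons_val_fin_one]
        simp [hd, map_neg]
        try ring
    · obtain ⟨γ, hcg⟩ := div_linear (hlin 0 0) ha (hlin 1 0) hac
      have hd : M 1 1 = C γ * M 0 1 := by
        apply mul_left_cancel₀ ha
        rw [had, hcg]; ring
      refine ⟨!![1, 0; -γ, 1], 1, ?_, by simp, Or.inr ⟨?_, ?_⟩⟩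
      · rw [Matrix.det_fin_two_of]; norm_num
      · simp only [Biact, Matrix.mul_apply, Fin.sum_univ_two, Matrix.map_apply,
          Matrix.one_apply, Matrix.cons_val', Matrix.cons_val_zero, Matrix.cons_val_one,
          Matrix.head_cons, Matrix.head_fin_const, Matrix.empty_val',
          Matrix.cons_val_fin_one]
        simp [hcg, map_neg]
        try ring
      · simp only [Biact, Matrix.mul_apply, Fin.sum_univ_two, Matrix.map_apply,
          Matrix.one_apply, Matrix.cons_val', Matrix.cons_val_zero, Matrix.cons_val_one,
          Matrix.head_cons, Matrix.head_fin_const, Matrix.empty_val',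
          Matrix.cons_val_fin_one]
        simp [hd, map_neg]
        try ring
end
end

section
/- Let M be a skew-symmetric 4×4 matrix of linear forms over ℂ with vanishing Pfaffian, i.e. m_{01}·m_{23} − m_{02}·m_{13} + m_{03}·m_{12} = 0. Then there exists S ∈ GL(4,ℂ) such that S·M·Sᵀ has one of the following two forms: m_{ij} = 0 for all i,j ∈ {1,2,3} (only the first row and column may be nonzero), or m_{i3} = m_{3i} = 0 for all i (the last row and column are zero). -/
open Matrix MvPolynomial

noncomputable section

/-!
Evaluating `M` at the points of `ℂⁿ` gives an additively closed family of complex skew matrices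
with vanishing Pfaffian, that is, of decomposable bivectors `v ∧ w`, each defining the line
`span {v, w}` of `ℙ³`. Since `Pf (v ∧ w + v' ∧ w') = det (v, w, v', w')`, any two of these lines
meet. Pairwise meeting lines all pass through one point `p` or all lie in one plane `φ = 0`; a
change of coordinates sending `p` to `e₀`, respectively `φ` to the last coordinate function,
produces the two normal forms.
-/

open Module Submodule

namespace Submodule

variable {K E : Type*} [Field K] [AddCommGroup E] [Module K E]

theorem le_of_finrank_eq_one_of_mem {P L : Submodule K E} (hP : finrank K P = 1) {x : E}
    (hxP : x ∈ P) (hx : x ≠ 0) (hxL : x ∈ L) : P ≤ L := by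
  have : FiniteDimensional K P := Module.finite_of_finrank_eq_succ hP
  have hspan : K ∙ x = P :=
    eq_of_le_of_finrank_le ((span_singleton_le_iff_mem x P).mpr hxP)
      (by rw [hP, finrank_span_singleton hx])
  exact hspan ▸ (span_singleton_le_iff_mem x L).mpr hxL

theorem le_of_finrank_eq_two_of_mem {L W : Submodule K E} (hL : finrank K L = 2) {x y : E}
    (hxL : x ∈ L) (hyL : y ∈ L) (hxW : x ∈ W) (hyW : y ∈ W) (hx : x ≠ 0)
    (hxy : ∀ a : K, a • x ≠ y) : L ≤ W := by
  have : FiniteDimensional K L := Module.finite_of_finrank_eq_succ hL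
  have hind : LinearIndependent K ![x, y] := (LinearIndependent.pair_iff' hx).mpr hxy
  have hspan : span K (Set.range ![x, y]) = L := by
    refine eq_of_le_of_finrank_le (span_le.mpr ?_) ?_
    · simp [Set.insert_subset_iff, hxL, hyL]
    · rw [hL, finrank_span_eq_card hind, Fintype.card_fin]
  rw [← hspan, span_le]
  simp [Set.insert_subset_iff, hxW, hyW]

theorem finrank_inf_eq_one_of_ne {L₁ L₂ : Submodule K E} (h₁ : finrank K L₁ = 2)
    (h₂ : finrank K L₂ = 2) (hne : L₁ ≠ L₂) (hmeet : L₁ ⊓ L₂ ≠ ⊥) :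
    finrank K ↥(L₁ ⊓ L₂) = 1 := by
  have : FiniteDimensional K L₁ := Module.finite_of_finrank_eq_succ h₁
  have : FiniteDimensional K L₂ := Module.finite_of_finrank_eq_succ h₂
  have hlt : L₁ ⊓ L₂ < L₁ := by
    refine inf_le_left.lt_of_ne fun h => hne ?_
    exact eq_of_le_of_finrank_le (inf_eq_left.mp h) (by rw [h₁, h₂])
  have := finrank_lt_finrank_of_lt hlt
  have := Submodule.finrank_eq_zero.not.mpr hmeet
  omega

theorem concurrent_or_coplanar_of_inf_ne_bot (S : Set (Submodule K E))
    (hrank : ∀ L ∈ S, finrank K L = 2) (hmeet : ∀ L ∈ S, ∀ L' ∈ S, L ⊓ L' ≠ ⊥) :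
    (∃ p ≠ 0, ∀ L ∈ S, p ∈ L) ∨ ∃ W : Submodule K E, finrank K W ≤ 3 ∧ ∀ L ∈ S, L ≤ W := by
  by_cases hsub : S.Subsingleton
  · right
    obtain rfl | ⟨L₁, hL₁⟩ := S.eq_empty_or_nonempty
    · exact ⟨⊥, by simp, by simp⟩
    · exact ⟨L₁, by simp [hrank L₁ hL₁], fun L hL => (hsub hL hL₁).le⟩
  obtain ⟨L₁, hL₁, L₂, hL₂, hne⟩ := Set.not_subsingleton_iff.mp hsub
  have : FiniteDimensional K L₁ := Module.finite_of_finrank_eq_succ (hrank L₁ hL₁)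
  have : FiniteDimensional K L₂ := Module.finite_of_finrank_eq_succ (hrank L₂ hL₂)
  set P := L₁ ⊓ L₂
  have hP : finrank K P = 1 :=
    finrank_inf_eq_one_of_ne (hrank L₁ hL₁) (hrank L₂ hL₂) hne (hmeet L₁ hL₁ L₂ hL₂)
  obtain ⟨p, hpP, hp⟩ := exists_mem_ne_zero_of_ne_bot (hmeet L₁ hL₁ L₂ hL₂)
  by_cases hconc : ∀ L ∈ S, P ≤ L
  · exact Or.inl ⟨p, hp, fun L hL => hconc L hL hpP⟩
  right
  push Not at hconc
  obtain ⟨L₃, hL₃, hPL₃⟩ := hconc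
  refine ⟨L₁ ⊔ L₂, ?_, ?_⟩
  · have := finrank_sup_add_finrank_inf_eq L₁ L₂
    rw [hP, hrank L₁ hL₁, hrank L₂ hL₂] at this
    omega
  -- a line missing `P` is spanned by its points on `L₁` and on `L₂`
  have hmiss : ∀ L ∈ S, ¬P ≤ L → L ≤ L₁ ⊔ L₂ := by
    intro L hL hPL
    obtain ⟨x₁, ⟨hx₁L, hx₁L₁⟩, hx₁⟩ := exists_mem_ne_zero_of_ne_bot (hmeet L hL L₁ hL₁)
    obtain ⟨x₂, ⟨hx₂L, hx₂L₂⟩, hx₂⟩ := exists_mem_ne_zero_of_ne_bot (hmeet L hL L₂ hL₂)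
    refine le_of_finrank_eq_two_of_mem (hrank L hL) hx₂L hx₁L (mem_sup_right hx₂L₂)
      (mem_sup_left hx₁L₁) hx₂ fun a ha => hPL ?_
    exact le_of_finrank_eq_one_of_mem hP ⟨hx₁L₁, ha ▸ smul_mem L₂ a hx₂L₂⟩ hx₁ hx₁L
  intro L hL
  by_cases hPL : P ≤ L
  · -- a line through `P` is spanned by `p` and its point on `L₃`
    obtain ⟨x₃, ⟨hx₃L, hx₃L₃⟩, hx₃⟩ := exists_mem_ne_zero_of_ne_bot (hmeet L hL L₃ hL₃)
    refine le_of_finrank_eq_two_of_mem (hrank L hL) (hPL hpP) hx₃L (mem_sup_left hpP.1)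
      (hmiss L₃ hL₃ hPL₃ hx₃L₃) hp fun a ha => hPL₃ ?_
    have ha0 : a ≠ 0 := by rintro rfl; exact hx₃ (by rw [← ha, zero_smul])
    exact le_of_finrank_eq_one_of_mem hP hpP hp ((smul_mem_iff L₃ ha0).mp (ha ▸ hx₃L₃))
  · exact hmiss L hL hPL

theorem finrank_span_pair {v w : E} (h : LinearIndependent K ![v, w]) :
    finrank K (span K {v, w}) = 2 := by
  rw [← Matrix.range_cons_cons_empty v w ![], finrank_span_eq_card h, Fintype.card_fin]

end Submodule

namespace Matrix

section CommRing

variable {R ι : Type*} [CommRing R]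

def wedge (v w : ι → R) : Matrix ι ι R := vecMulVec v w - vecMulVec w v

theorem wedge_apply (v w : ι → R) (i j : ι) : wedge v w i j = v i * w j - w i * v j := rfl

theorem wedge_zero_right (v : ι → R) : wedge v 0 = 0 := by simp [wedge]

theorem mul_wedge_mul_transpose [Fintype ι] (S : Matrix ι ι R) (v w : ι → R) :
    S * wedge v w * Sᵀ = wedge (S *ᵥ v) (S *ᵥ w) := by
  simp only [wedge, Matrix.mul_sub, Matrix.sub_mul, mul_vecMulVec, vecMulVec_mul, vecMul_transpose]

def pfaffian4 (A : Matrix (Fin 4) (Fin 4) R) : R := A 0 1 * A 2 3 - A 0 2 * A 1 3 + A 0 3 * A 1 2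

theorem pfaffian4_plucker {A : Matrix (Fin 4) (Fin 4) R} (hA : Aᵀ = -A) (hdiag : ∀ i, A i i = 0)
    (hpf : pfaffian4 A = 0) (i j k l : Fin 4) :
    A i j * A k l = A i k * A j l - A i l * A j k := by
  have hs : ∀ i j, A j i = -A i j := fun i j => congr_fun₂ hA i j
  unfold pfaffian4 at hpf
  -- after normalising by skewness, each instance is `± Pf A = 0` or a ring identity
  fin_cases i <;> fin_cases j <;> fin_cases k <;> fin_cases l <;>
    simp only [Fin.zero_eta, Fin.mk_one, Fin.reduceFinMk, hdiag, hs 0 1, hs 0 2, hs 0 3, hs 1 2,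
      hs 1 3, hs 2 3] <;>
    first | ring1 | linear_combination hpf | linear_combination -hpf

theorem pfaffian4_wedge_add_wedge (v w v' w' : Fin 4 → R) :
    pfaffian4 (wedge v w + wedge v' w') = (of ![v, w, v', w']).det := by
  rw [det_succ_row_zero, Fin.sum_univ_four]
  simp only [pfaffian4, Fin.isValue, Matrix.add_apply, wedge_apply, Nat.succ_eq_add_one,
    Nat.reduceAdd, Fin.coe_ofNat_eq_mod, Nat.zero_mod, pow_zero, of_apply, cons_val',
    cons_val_fin_one, cons_val_zero, one_mul, Fin.succAbove_zero, det_fin_three, submatrix_apply,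
    Fin.succ_zero_eq_one, cons_val_one, Fin.succ_one_eq_two, cons_val, Fin.reduceSucc, Nat.one_mod,
    pow_one, neg_mul, Fin.succAbove, Fin.castSucc_zero, zero_lt_one, ↓reduceIte, Fin.castSucc_one,
    lt_self_iff_false, Fin.reduceCastSucc, Fin.lt_one_iff, Fin.reduceEq, Nat.reduceMod, even_two,
    Even.neg_pow, one_pow, Fin.reduceLT, Nat.mod_succ]
  ring

end CommRing

section Field

variable {K ι : Type*} [Field K]

theorem exists_eq_wedge_of_pfaffian4_eq_zero {A : Matrix (Fin 4) (Fin 4) K} (hA : Aᵀ = -A)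
    (hdiag : ∀ i, A i i = 0) (hpf : pfaffian4 A = 0) : ∃ v w, A = wedge v w := by
  by_cases hA0 : A = 0
  · exact ⟨0, 0, by simp [hA0, wedge]⟩
  obtain ⟨k, l, hkl⟩ : ∃ k l, A k l ≠ 0 := by simpa [← Matrix.ext_iff] using hA0
  refine ⟨fun i => A i k, fun j => A j l / A k l, Matrix.ext fun i j => ?_⟩
  rw [wedge_apply]
  field_simp
  linear_combination pfaffian4_plucker hA hdiag hpf i j k l

theorem linearIndependent_of_wedge_ne_zero {v w : ι → K} (h : wedge v w ≠ 0) :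
    LinearIndependent K ![v, w] := by
  refine LinearIndependent.pair_iff.mpr fun s t hst => ?_
  have hst' : ∀ i, s * v i + t * w i = 0 := fun i => by simpa using congr_fun hst i
  have hs : s • wedge v w = 0 := by
    ext i j
    simp only [smul_apply, wedge_apply, smul_eq_mul, zero_apply]
    linear_combination w j * hst' i - w i * hst' j
  have ht : t • wedge v w = 0 := by
    ext i j
    simp only [smul_apply, wedge_apply, smul_eq_mul, zero_apply]
    linear_combination v i * hst' j - v j * hst' i
  exact ⟨(smul_eq_zero.mp hs).resolve_right h, (smul_eq_zero.mp ht).resolve_right h⟩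

theorem exists_wedge_eq_of_mem_span_pair {v w p : ι → K} (hp : p ≠ 0)
    (hpvw : p ∈ span K {v, w}) : ∃ u, wedge v w = wedge p u := by
  obtain ⟨a, b, rfl⟩ := mem_span_pair.mp hpvw
  by_cases ha : a = 0
  · have hb : b ≠ 0 := by rintro rfl; simp [ha] at hp
    refine ⟨-b⁻¹ • v, Matrix.ext fun i j => ?_⟩
    simp only [wedge_apply, ha, Pi.add_apply, Pi.smul_apply, smul_eq_mul]
    field_simp
    ring
  · refine ⟨a⁻¹ • w, Matrix.ext fun i j => ?_⟩
    simp only [wedge_apply, Pi.add_apply, Pi.smul_apply, smul_eq_mul]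
    field_simp
    ring

theorem span_pair_inf_ne_bot_of_det_eq_zero {v w v' w' : Fin 4 → K}
    (h : LinearIndependent K ![v, w]) (h' : LinearIndependent K ![v', w'])
    (hdet : (of ![v, w, v', w']).det = 0) : span K {v, w} ⊓ span K {v', w'} ≠ ⊥ := by
  obtain ⟨c, hc, hcomb⟩ := exists_vecMul_eq_zero_iff.mpr hdet
  replace hcomb : c 0 • v + c 1 • w = -(c 2 • v' + c 3 • w') := by
    rw [vecMul_eq_sum, Fin.sum_univ_four, add_assoc] at hcomb
    exact eq_neg_of_add_eq_zero_left hcomb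
  intro hbot
  have hx := Submodule.disjoint_def.mp (disjoint_iff.mpr hbot) (c 0 • v + c 1 • w)
    (mem_span_pair.mpr ⟨_, _, rfl⟩)
    (mem_span_pair.mpr ⟨-c 2, -c 3, by rw [hcomb, neg_add, neg_smul, neg_smul]⟩)
  obtain ⟨h0, h1⟩ := LinearIndependent.pair_iff.mp h _ _ hx
  obtain ⟨h2, h3⟩ := LinearIndependent.pair_iff.mp h' (c 2) (c 3) (by
    rwa [h0, h1, zero_smul, zero_smul, add_zero, eq_comm, neg_eq_zero] at hcomb)
  exact hc (funext fun i => by fin_cases i <;> assumption)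

theorem exists_isUnit_det_mulVec_single_eq [Fintype ι] [DecidableEq ι]
    {v : ι → K} (hv : v ≠ 0) (i : ι) :
    ∃ U : Matrix ι ι K, IsUnit U.det ∧ U *ᵥ Pi.single i 1 = v := by
  obtain ⟨j, hj⟩ := Function.ne_iff.mp hv
  refine ⟨(updateCol 1 j v).submatrix id (Equiv.swap i j), ?_, by ext; simp⟩
  have hcol : (fun k => ∑ l, v l • (1 : Matrix ι ι K) k l) = v := by
    ext k
    simp [one_apply]
  rw [det_permute', ← hcol, det_updateCol_sum, det_one, smul_eq_mul, mul_one]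
  exact ((Units.isUnit _).map (Int.castRingHom K)).mul (isUnit_iff_ne_zero.mpr hj)

theorem exists_isUnit_det_mulVec_eq_single [Fintype ι] [DecidableEq ι]
    {v : ι → K} (hv : v ≠ 0) (i : ι) :
    ∃ T : Matrix ι ι K, IsUnit T.det ∧ T *ᵥ v = Pi.single i 1 := by
  obtain ⟨U, hU, hUv⟩ := exists_isUnit_det_mulVec_single_eq hv i
  refine ⟨U⁻¹, isUnit_nonsing_inv_det U hU, ?_⟩
  rw [← hUv, mulVec_mulVec, nonsing_inv_mul U hU, one_mulVec]

theorem exists_isUnit_det_row_eq [Fintype ι] [DecidableEq ι]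
    {v : ι → K} (hv : v ≠ 0) (i : ι) : ∃ S : Matrix ι ι K, IsUnit S.det ∧ S i = v := by
  obtain ⟨U, hU, hUv⟩ := exists_isUnit_det_mulVec_single_eq hv i
  exact ⟨Uᵀ, by rwa [det_transpose], by rw [← hUv, mulVec_single_one]; rfl⟩

theorem dotProduct_apply_single_eq_apply [Fintype ι] [DecidableEq ι]
    (f : Module.Dual K (ι → K)) (x : ι → K) : (fun i => f (Pi.single i 1)) ⬝ᵥ x = f x := by
  rw [LinearMap.pi_apply_eq_sum_univ f x, dotProduct]
  refine Finset.sum_congr rfl fun i _ => ?_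
  rw [smul_eq_mul, mul_comm]
  congr 2
  ext j
  simp [Pi.single_apply, eq_comm]

theorem wedge_concurrent_or_coplanar (V : Set (Matrix (Fin 4) (Fin 4) K))
    (hV : ∀ A ∈ V, ∃ v w, A = wedge v w) (hpf : ∀ A ∈ V, ∀ B ∈ V, pfaffian4 (A + B) = 0) :
    (∃ p ≠ 0, ∀ A ∈ V, ∃ u, A = wedge p u) ∨
      ∃ φ ≠ 0, ∀ A ∈ V, ∃ v w, φ ⬝ᵥ v = 0 ∧ φ ⬝ᵥ w = 0 ∧ A = wedge v w := by
  have hdec : ∀ A ∈ V, A = 0 ∨ ∃ v w, LinearIndependent K ![v, w] ∧ A = wedge v w := by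
    intro A hA
    obtain ⟨v, w, rfl⟩ := hV A hA
    by_cases h0 : wedge v w = 0
    · exact Or.inl h0
    · exact Or.inr ⟨v, w, linearIndependent_of_wedge_ne_zero h0, rfl⟩
  set S := {L | ∃ v w, LinearIndependent K ![v, w] ∧ wedge v w ∈ V ∧ span K {v, w} = L}
  have hrank : ∀ L ∈ S, finrank K L = 2 := by
    rintro _ ⟨v, w, h, -, rfl⟩
    exact finrank_span_pair h
  have hmeet : ∀ L ∈ S, ∀ L' ∈ S, L ⊓ L' ≠ ⊥ := by
    rintro _ ⟨v, w, h, hA, rfl⟩ _ ⟨v', w', h', hB, rfl⟩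
    exact span_pair_inf_ne_bot_of_det_eq_zero h h'
      (pfaffian4_wedge_add_wedge v w v' w' ▸ hpf _ hA _ hB)
  rcases concurrent_or_coplanar_of_inf_ne_bot S hrank hmeet with ⟨p, hp, hpS⟩ | ⟨W, hW, hWS⟩
  · refine Or.inl ⟨p, hp, fun A hA => ?_⟩
    rcases hdec A hA with rfl | ⟨v, w, h, rfl⟩
    · exact ⟨0, (wedge_zero_right p).symm⟩
    · exact exists_wedge_eq_of_mem_span_pair hp (hpS _ ⟨v, w, h, hA, rfl⟩)
  · have hWtop : W < ⊤ := lt_top_of_finrank_lt_finrank (by simp; omega)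
    obtain ⟨f, hf, hWf⟩ := W.exists_le_ker_of_lt_top hWtop
    refine Or.inr ⟨fun i => f (Pi.single i 1), fun h0 => hf (LinearMap.ext fun x => ?_),
      fun A hA => ?_⟩
    · rw [← dotProduct_apply_single_eq_apply, h0, zero_dotProduct, LinearMap.zero_apply]
    rcases hdec A hA with rfl | ⟨v, w, h, rfl⟩
    · exact ⟨0, 0, dotProduct_zero _, dotProduct_zero _, (wedge_zero_right 0).symm⟩
    · have hL := hWS _ ⟨v, w, h, hA, rfl⟩
      refine ⟨v, w, ?_, ?_, rfl⟩ <;> rw [dotProduct_apply_single_eq_apply]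
      · exact hWf (hL (subset_span (by simp)))
      · exact hWf (hL (subset_span (by simp)))

end Field

end Matrix

namespace MvPolynomial

theorem eval_add_of_isHomogeneous_one {σ R : Type*} [CommSemiring R] {P : MvPolynomial σ R}
    (hP : P.IsHomogeneous 1) (s t : σ → R) : eval (s + t) P = eval s P + eval t P := by
  have hP' : P ∈ Submodule.span R (Set.range X) := by
    rw [← homogeneousSubmodule_one_eq_span_X]
    exact hP
  clear hP
  induction hP' using Submodule.span_induction with
  | mem x hx => obtain ⟨i, rfl⟩ := hx; simp
  | zero => simp
  | add x y _ _ hx hy => rw [map_add, map_add, map_add, hx, hy]; ring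
  | smul a x _ hx => rw [smul_eval, smul_eval, smul_eval, hx]; ring

end MvPolynomial

section Evaluation

variable {n : ℕ}

theorem pfaffian4_map_eval_eq_zero {M : Matrix (Fin 4) (Fin 4) (CPoly n)} (hpf : pfaffian4 M = 0)
    (t : Fin n → ℂ) : pfaffian4 (M.map (eval t)) = 0 := by
  simpa [pfaffian4] using congr_arg (eval t) hpf

theorem exists_map_eval_eq_wedge {M : Matrix (Fin 4) (Fin 4) (CPoly n)} (hskew : IsSkewMat M)
    (hpf : pfaffian4 M = 0) (t : Fin n → ℂ) : ∃ v w, M.map (eval t) = wedge v w := by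
  refine exists_eq_wedge_of_pfaffian4_eq_zero ?_ (fun i => by simp [hskew.2])
    (pfaffian4_map_eval_eq_zero hpf t)
  rw [← transpose_map, hskew.1, Matrix.map_neg _ (map_neg _)]

theorem map_eval_add {k : ℕ} {M : Matrix (Fin k) (Fin k) (CPoly n)} (hlin : LinForms M)
    (s t : Fin n → ℂ) : M.map (eval s) + M.map (eval t) = M.map (eval (s + t)) :=
  Matrix.ext fun i j => (eval_add_of_isHomogeneous_one (hlin i j) s t).symm

theorem congr_apply_eq_zero_of_forall_eval {k : ℕ} {S : Matrix (Fin k) (Fin k) ℂ}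
    {M : Matrix (Fin k) (Fin k) (CPoly n)} {i j : Fin k}
    (h : ∀ t, (S * M.map (eval t) * Sᵀ) i j = 0) : Congr S M i j = 0 := by
  refine MvPolynomial.funext fun t => ?_
  have hS : (S.map C).map (eval t) = S := by ext; simp
  have hmap : (Congr S M).map (eval t) = S * M.map (eval t) * Sᵀ := by
    rw [Congr, Matrix.map_mul, Matrix.map_mul, transpose_map, hS]
  simpa [← hmap] using h t

end Evaluation

theorem statement14_general {n : ℕ} (M : Matrix (Fin 4) (Fin 4) (CPoly n))
    (hlin : LinForms M) (hskew : IsSkewMat M)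
    (hpf : M 0 1 * M 2 3 - M 0 2 * M 1 3 + M 0 3 * M 1 2 = 0) :
    ∃ S : Matrix (Fin 4) (Fin 4) ℂ, IsUnit S.det ∧
      ((∀ i j : Fin 4, 1 ≤ (i : ℕ) → 1 ≤ (j : ℕ) → Congr S M i j = 0) ∨
       (∀ i : Fin 4, Congr S M i 3 = 0 ∧ Congr S M 3 i = 0)) := by
  set V := Set.range fun t : Fin n → ℂ => M.map (eval t)
  have hwedge : ∀ A ∈ V, ∃ v w, A = wedge v w := by
    rintro _ ⟨t, rfl⟩
    exact exists_map_eval_eq_wedge hskew hpf t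
  have hadd : ∀ A ∈ V, ∀ B ∈ V, pfaffian4 (A + B) = 0 := by
    rintro _ ⟨s, rfl⟩ _ ⟨t, rfl⟩
    rw [map_eval_add hlin]
    exact pfaffian4_map_eval_eq_zero hpf (s + t)
  rcases wedge_concurrent_or_coplanar V hwedge hadd with ⟨p, hp, hpV⟩ | ⟨φ, hφ, hφV⟩
  · obtain ⟨S, hS, hSp⟩ := exists_isUnit_det_mulVec_eq_single hp 0
    refine ⟨S, hS, Or.inl fun i j hi hj => congr_apply_eq_zero_of_forall_eval fun t => ?_⟩
    obtain ⟨u, hu⟩ := hpV _ ⟨t, rfl⟩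
    have hi0 : i ≠ 0 := by rintro rfl; simp at hi
    have hj0 : j ≠ 0 := by rintro rfl; simp at hj
    simp [hu, mul_wedge_mul_transpose, hSp, wedge_apply, hi0, hj0]
  · obtain ⟨S, hS, hSφ⟩ := exists_isUnit_det_row_eq hφ 3
    refine ⟨S, hS, Or.inr fun i => ⟨?_, ?_⟩⟩
    all_goals
      refine congr_apply_eq_zero_of_forall_eval fun t => ?_
      obtain ⟨v, w, hv, hw, hvw⟩ := hφV _ ⟨t, rfl⟩
      have hv3 : (S *ᵥ v) 3 = 0 := by rwa [mulVec, hSφ]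
      have hw3 : (S *ᵥ w) 3 = 0 := by rwa [mulVec, hSφ]
      simp [hvw, mul_wedge_mul_transpose, wedge_apply, hv3, hw3]

/-- A skew-symmetric `4×4` matrix of linear forms with vanishing Pfaffian is congruent to
a matrix in which only the first row and column may be nonzero, or to one whose last row
and column are zero. -/
theorem statement14 {n : ℕ} (hn : 1 ≤ n) (M : Matrix (Fin 4) (Fin 4) (CPoly n))
    (hlin : LinForms M) (hskew : IsSkewMat M)
    (hpf : M 0 1 * M 2 3 - M 0 2 * M 1 3 + M 0 3 * M 1 2 = 0) :
    ∃ S : Matrix (Fin 4) (Fin 4) ℂ, IsUnit S.det ∧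
      ((∀ i j : Fin 4, 1 ≤ (i : ℕ) → 1 ≤ (j : ℕ) → Congr S M i j = 0) ∨
       (∀ i : Fin 4, Congr S M i 3 = 0 ∧ Congr S M 3 i = 0)) :=
  statement14_general M hlin hskew hpf
end
end
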